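/- arXiv:1808.03877 — 2 statements merged into one kernel-verified Lean document; each statement's English description precedes it below -/
import Mathlib

section
/- Let f : F_q → F_p be weakly regular s-plateaued with sign ε and dual g. Then the Walsh transform of g at 0 satisfies W_g(0) = Σ_{β∈F_q} ξ_p^{g(β)} = p^n − p^{n−s} + ε · η_0(−1)^n · √(p*)^{n−s} · ξ_p^{f(0)}. -/
/-!
Inverting the Walsh transform at `0` gives `∑_β W_f(β) = q ξ_p^{f(0)}`, and Parseval gives
`#Supp(W_f) = p^{n-s}`. On the support `W_f(β) = ε √(p*)^{n+s} ξ_p^{g(β)}`, so the sum of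
`ξ_p^{g(β)}` over the support is
`q ξ_p^{f(0)} / (ε √(p*)^{n+s}) = ε η₀(-1)^n √(p*)^{n-s} ξ_p^{f(0)}`, because
`η₀(-1) √(p*)² = p`. Off the support `g = 0`, which contributes `p^n - p^{n-s}`.
-/

open scoped BigOperators Classical

noncomputable section

/-- `ξ_p^j` for `j : ZMod p`, where `ξ_p = exp(2πi/p)` and the exponent `j`
is lifted to a natural number. -/
def ep (p : ℕ) (j : ZMod p) : ℂ :=
  Complex.exp (2 * Real.pi * Complex.I * (j.val : ℂ) / (p : ℂ))

/-- `√(p*)`: equal to `√p` if `p ≡ 1 (mod 4)` and to `i√p` if `p ≡ 3 (mod 4)`. -/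
def sqrtPStar (p : ℕ) : ℂ :=
  if p % 4 = 1 then ((Real.sqrt p : ℝ) : ℂ) else Complex.I * ((Real.sqrt p : ℝ) : ℂ)

/-- The quadratic character `η₀` of `F_p` (extended by `η₀(0) = 0`), with values in `ℂ`. -/
def eta0 (p : ℕ) [Fact p.Prime] (j : ZMod p) : ℂ :=
  ((quadraticChar (ZMod p) j : ℤ) : ℂ)

/-- The Walsh transform of `f : F_q → F_p`. -/
def walsh (p : ℕ) {F : Type*} [Field F] [Fintype F] [Algebra (ZMod p) F]
    (f : F → ZMod p) (β : F) : ℂ :=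
  ∑ x : F, ep p (f x - Algebra.trace (ZMod p) F (β * x))

/-- `f` is weakly regular `s`-plateaued with sign `ε` and dual `g`:
`W_f(β) = ε √(p*)^{n+s} ξ_p^{g(β)}` on the Walsh support, `W_f(β) = 0` off it,
and `g` vanishes off the Walsh support. -/
def IsWeaklyRegularPlateaued (p n s : ℕ) {F : Type*} [Field F] [Fintype F]
    [Algebra (ZMod p) F] (f : F → ZMod p) (ε : ℂ) (g : F → ZMod p) : Prop :=
  (ε = 1 ∨ ε = -1) ∧
  (∀ β : F, walsh p f β ≠ 0 →
      walsh p f β = ε * sqrtPStar p ^ (n + s) * ep p (g β)) ∧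
  (∀ β : F, walsh p f β = 0 → g β = 0)

/-- `f` lies in the class `WRP`: weakly regular `s`-plateaued with sign `ε` and dual `g`,
unbalanced, `f(0) = 0`, and `f(ax) = a^h f(x)` for some positive even `h` with
`gcd(h-1, p-1) = 1`. -/
def IsWRP (p n s : ℕ) {F : Type*} [Field F] [Fintype F]
    [Algebra (ZMod p) F] (f : F → ZMod p) (ε : ℂ) (g : F → ZMod p) : Prop :=
  IsWeaklyRegularPlateaued p n s f ε g ∧
  walsh p f 0 ≠ 0 ∧
  f 0 = 0 ∧
  ∃ h : ℕ, 0 < h ∧ Even h ∧ Nat.gcd (h - 1) (p - 1) = 1 ∧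
    ∀ (a : (ZMod p)ˣ) (x : F),
      f (algebraMap (ZMod p) F (a : ZMod p) * x) = (a : ZMod p) ^ h * f x

namespace AddChar

variable {R : Type*} [CommRing R] [Fintype R] {ψ : AddChar R ℂ}

theorem sum_sum_mul_apply_mul (hψ : ψ.IsPrimitive) (φ : R → ℂ) :
    ∑ b, ∑ x, φ x * ψ (b * x) = Fintype.card R * φ 0 := by
  rw [Finset.sum_comm]
  simp_rw [← Finset.mul_sum]
  rw [Finset.sum_congr rfl fun x _ => congrArg (φ x * ·) (sum_mulShift x hψ)]
  simp [mul_comm]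

theorem sum_norm_sum_mul_apply_mul_sq (hψ : ψ.IsPrimitive) (φ : R → ℂ) :
    ∑ b, ‖∑ x, φ x * ψ (b * x)‖ ^ 2 = Fintype.card R * ∑ x, ‖φ x‖ ^ 2 := by
  have term : ∀ x y b : R, φ x * ψ (b * x) * (starRingEnd ℂ) (φ y * ψ (b * y)) =
      φ x * (starRingEnd ℂ) (φ y) * ψ (b * (x - y)) := by
    intro x y b
    rw [(starRingEnd ℂ).map_mul, ← map_neg_eq_conj, mul_sub, sub_eq_add_neg, ← mul_neg,
      map_add_eq_mul]
    ring
  have inner : ∀ x y : R, ∑ b, φ x * (starRingEnd ℂ) (φ y) * ψ (b * (x - y)) =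
      if x = y then Fintype.card R * (‖φ x‖ : ℂ) ^ 2 else 0 := by
    intro x y
    rw [← Finset.mul_sum, sum_mulShift _ hψ, sub_eq_zero]
    split_ifs with hxy
    · rw [hxy, Complex.mul_conj', mul_comm]
    · rw [Nat.cast_zero, mul_zero]
  apply Complex.ofReal_injective
  push_cast
  simp_rw [← Complex.mul_conj', map_sum, Finset.sum_mul_sum, term]
  rw [Finset.sum_comm, Finset.mul_sum]
  refine Finset.sum_congr rfl fun x _ => ?_
  rw [Finset.sum_comm]
  simp_rw [inner, Finset.sum_ite_eq, Finset.mem_univ, if_true, Complex.mul_conj']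

end AddChar

lemma norm_sqrtPStar (p : ℕ) : ‖sqrtPStar p‖ = √(p : ℝ) := by
  unfold sqrtPStar
  split_ifs <;> simp [Real.sqrt_nonneg]

section

variable {p : ℕ} [NeZero p]

lemma ep_eq_stdAddChar (j : ZMod p) : ep p j = ZMod.stdAddChar j := by
  rw [ZMod.stdAddChar_apply, ZMod.toCircle_apply, ep]

lemma norm_ep (j : ZMod p) : ‖ep p j‖ = 1 := by
  rw [ep_eq_stdAddChar, AddChar.norm_apply]

end

section

variable {p : ℕ} [Fact p.Prime]

lemma eta0_neg_one_mul_sqrtPStar_sq (hp : p ≠ 2) : eta0 p (-1) * sqrtPStar p ^ 2 = p := by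
  have hsqrt : ((√(p : ℝ) : ℝ) : ℂ) ^ 2 = p := by
    rw [← Complex.ofReal_pow, Real.sq_sqrt (Nat.cast_nonneg p), Complex.ofReal_natCast]
  have hchar : quadraticChar (ZMod p) (-1) = ZMod.χ₄ p := by
    rw [quadraticChar_neg_one (by rwa [ZMod.ringChar_zmod_n]), ZMod.card]
  rw [eta0, hchar, sqrtPStar]
  rcases Nat.odd_mod_four_iff.mp ((Fact.out : p.Prime).mod_two_eq_one_iff_ne_two.mpr hp)
    with h | h
  · rw [ZMod.χ₄_nat_one_mod_four h, if_pos h, hsqrt]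
    push_cast; ring
  · rw [ZMod.χ₄_nat_three_mod_four h, if_neg (by omega), mul_pow, Complex.I_sq, hsqrt]
    push_cast; ring

variable {F : Type*} [Field F] [Algebra (ZMod p) F]

variable (p F) in
def traceChar : AddChar F ℂ :=
  ZMod.stdAddChar.compAddMonoidHom (Algebra.trace (ZMod p) F).toAddMonoidHom

lemma traceChar_apply (x : F) : traceChar p F x = ep p (Algebra.trace (ZMod p) F x) := by
  rw [ep_eq_stdAddChar]; rfl

lemma isPrimitive_traceChar [Finite F] : (traceChar p F).IsPrimitive := by
  refine AddChar.IsPrimitive.of_ne_one (AddChar.ne_one_iff.2 ?_)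
  obtain ⟨x, hx⟩ := Algebra.trace_surjective (ZMod p) F 1
  refine ⟨x, ?_⟩
  rw [traceChar_apply, hx, ep_eq_stdAddChar,
    ← AddChar.map_zero_eq_one (ZMod.stdAddChar (N := p)), ZMod.injective_stdAddChar.ne_iff]
  exact one_ne_zero

variable [Fintype F]

lemma walsh_zero (f : F → ZMod p) : walsh p f 0 = ∑ x, ep p (f x) := by
  simp only [walsh, zero_mul, map_zero, sub_zero]

lemma walsh_neg_eq_sum_mul_traceChar (f : F → ZMod p) (β : F) :
    walsh p f (-β) = ∑ x, ep p (f x) * traceChar p F (β * x) := by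
  refine Finset.sum_congr rfl fun x _ => ?_
  rw [traceChar_apply, ep_eq_stdAddChar, ep_eq_stdAddChar, ep_eq_stdAddChar, neg_mul,
    map_neg (Algebra.trace (ZMod p) F), sub_neg_eq_add, AddChar.map_add_eq_mul]

lemma sum_walsh (f : F → ZMod p) :
    ∑ β, walsh p f β = Fintype.card F * ep p (f 0) := by
  rw [← Equiv.sum_comp (Equiv.neg F)]
  simp only [Equiv.neg_apply, walsh_neg_eq_sum_mul_traceChar]
  exact AddChar.sum_sum_mul_apply_mul isPrimitive_traceChar (ep p ∘ f)

lemma sum_norm_walsh_sq (f : F → ZMod p) :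
    ∑ β, ‖walsh p f β‖ ^ 2 = (Fintype.card F : ℝ) ^ 2 := by
  rw [← Equiv.sum_comp (Equiv.neg F)]
  simp only [Equiv.neg_apply, walsh_neg_eq_sum_mul_traceChar]
  refine (AddChar.sum_norm_sum_mul_apply_mul_sq isPrimitive_traceChar (ep p ∘ f)).trans ?_
  simp only [Function.comp_apply, norm_ep, Finset.sum_const, Finset.card_univ,
    nsmul_eq_mul, mul_one, sq]

variable (p) in
def walshSupport (f : F → ZMod p) : Finset F :=
  Finset.univ.filter fun β => walsh p f β ≠ 0

lemma mem_walshSupport {f : F → ZMod p} {β : F} :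
    β ∈ walshSupport p f ↔ walsh p f β ≠ 0 := by
  simp [walshSupport]

namespace IsWeaklyRegularPlateaued

variable {n s : ℕ} {f g : F → ZMod p} {ε : ℂ}

lemma norm_walsh_sq (hf : IsWeaklyRegularPlateaued p n s f ε g) {β : F}
    (hβ : β ∈ walshSupport p f) : ‖walsh p f β‖ ^ 2 = (p : ℝ) ^ (n + s) := by
  have hε : ‖ε‖ = 1 := by rcases hf.1 with rfl | rfl <;> simp
  rw [hf.2.1 β (mem_walshSupport.1 hβ), norm_mul, norm_mul, norm_pow, hε, norm_sqrtPStar,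
    norm_ep, one_mul, mul_one, ← pow_mul, mul_comm, pow_mul, Real.sq_sqrt (Nat.cast_nonneg p)]

lemma card_walshSupport (hf : IsWeaklyRegularPlateaued p n s f ε g)
    (hq : Fintype.card F = p ^ n) (hs : s ≤ n) :
    (walshSupport p f).card = p ^ (n - s) := by
  have hsum :
      ∑ β ∈ walshSupport p f, ‖walsh p f β‖ ^ 2 = ∑ β, ‖walsh p f β‖ ^ 2 :=
    Finset.sum_subset (Finset.subset_univ _) fun β _ hβ => by
      rw [mem_walshSupport, not_not] at hβ
      rw [hβ, norm_zero, sq, zero_mul]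
  rw [Finset.sum_congr rfl fun β => hf.norm_walsh_sq, Finset.sum_const, nsmul_eq_mul,
    sum_norm_walsh_sq, hq, Nat.cast_pow, ← pow_mul,
    show n * 2 = n - s + (n + s) by omega, pow_add (p : ℝ) (n - s)] at hsum
  exact_mod_cast mul_right_cancel₀
    (pow_ne_zero _ (Nat.cast_ne_zero.2 (Fact.out : p.Prime).ne_zero)) hsum

lemma sum_ep_dual_compl_walshSupport (hf : IsWeaklyRegularPlateaued p n s f ε g)
    (hq : Fintype.card F = p ^ n) (hs : s ≤ n) :
    ∑ β ∈ (walshSupport p f)ᶜ, ep p (g β) = (p : ℂ) ^ n - (p : ℂ) ^ (n - s) := by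
  have hone : ∀ β ∈ (walshSupport p f)ᶜ, ep p (g β) = 1 := fun β hβ => by
    rw [Finset.mem_compl, mem_walshSupport, not_not] at hβ
    rw [hf.2.2 β hβ, ep_eq_stdAddChar, AddChar.map_zero_eq_one]
  rw [Finset.sum_congr rfl hone, Finset.sum_const, Finset.card_compl, hq,
    hf.card_walshSupport hq hs, nsmul_eq_mul, mul_one,
    Nat.cast_sub (Nat.pow_le_pow_right (Fact.out : p.Prime).pos (by omega))]
  norm_cast

lemma mul_sum_ep_dual_walshSupport (hf : IsWeaklyRegularPlateaued p n s f ε g) :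
    ε * sqrtPStar p ^ (n + s) * ∑ β ∈ walshSupport p f, ep p (g β) =
      Fintype.card F * ep p (f 0) := by
  rw [Finset.mul_sum, ← sum_walsh, ← Finset.sum_filter_ne_zero (s := Finset.univ)]
  exact Finset.sum_congr rfl fun β hβ => (hf.2.1 β (mem_walshSupport.1 hβ)).symm

lemma sum_ep_dual_walshSupport (hf : IsWeaklyRegularPlateaued p n s f ε g) (hp : p ≠ 2)
    (hq : Fintype.card F = p ^ n) (hs : s ≤ n) :
    ∑ β ∈ walshSupport p f, ep p (g β) =
      ε * eta0 p (-1) ^ n * sqrtPStar p ^ (n - s) * ep p (f 0) := by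
  have hε : ε * ε = 1 := by rcases hf.1 with rfl | rfl <;> norm_num
  have hc : ε * sqrtPStar p ^ (n + s) ≠ 0 := by
    refine mul_ne_zero (left_ne_zero_of_mul_eq_one hε) (pow_ne_zero _ ?_)
    rw [← norm_ne_zero_iff, norm_sqrtPStar, Real.sqrt_ne_zero']
    exact_mod_cast (Fact.out : p.Prime).pos
  refine mul_left_cancel₀ hc (hf.mul_sum_ep_dual_walshSupport.trans ?_)
  calc (Fintype.card F : ℂ) * ep p (f 0)
      = (ε * ε) * (eta0 p (-1) * sqrtPStar p ^ 2) ^ n * ep p (f 0) := by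
        rw [hε, eta0_neg_one_mul_sqrtPStar_sq hp, hq]; push_cast; ring
    _ = _ := by
        rw [mul_pow, ← pow_mul, show 2 * n = (n + s) + (n - s) by omega, pow_add]; ring

end IsWeaklyRegularPlateaued

end

theorem statement_1_general (p n s : ℕ) [Fact p.Prime] (hp : p ≠ 2) (hs : s ≤ n)
    {F : Type*} [Field F] [Fintype F] [Algebra (ZMod p) F]
    (hq : Fintype.card F = p ^ n)
    (f g : F → ZMod p) (ε : ℂ)
    (hf : IsWeaklyRegularPlateaued p n s f ε g) :
    walsh p g 0 = ∑ β : F, ep p (g β) ∧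
    walsh p g 0 = (p : ℂ) ^ n - (p : ℂ) ^ (n - s)
        + ε * (eta0 p (-1)) ^ n * sqrtPStar p ^ (n - s) * ep p (f 0) := by
  refine ⟨walsh_zero g, ?_⟩
  rw [walsh_zero, ← Finset.sum_add_sum_compl (walshSupport p f),
    hf.sum_ep_dual_walshSupport hp hq hs, hf.sum_ep_dual_compl_walshSupport hq hs, add_comm]

theorem statement_1 (p n s : ℕ) [Fact p.Prime] (hp : p ≠ 2) (hn : 0 < n) (hs : s ≤ n)
    {F : Type*} [Field F] [Fintype F] [Algebra (ZMod p) F]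
    (hq : Fintype.card F = p ^ n)
    (f g : F → ZMod p) (ε : ℂ)
    (hf : IsWeaklyRegularPlateaued p n s f ε g) :
    walsh p g 0 = ∑ β : F, ep p (g β) ∧
    walsh p g 0 = (p : ℂ) ^ n - (p : ℂ) ^ (n - s)
        + ε * (eta0 p (-1)) ^ n * sqrtPStar p ^ (n - s) * ep p (f 0) :=
  statement_1_general p n s hp hs hq f g ε hf
end
end

section
/- Let f ∈ WRP with dual g. Then there exists a positive even integer l with gcd(l−1, p−1) = 1 such that g(aβ) = a^l · g(β) for every a ∈ F_p^* (viewed in F_q via the canonical embedding) and every β ∈ Supp(W_f). -/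
open scoped BigOperators Classical

noncomputable section

/-! ### Auxiliary lemmas -/

open IntermediateField

lemma ep_eq_pow (p : ℕ) (j : ZMod p) :
    ep p j = Complex.exp (2 * Real.pi * Complex.I / p) ^ j.val := by
  rw [ep, ← Complex.exp_nat_mul]
  congr 1
  ring

lemma ep_injective (p : ℕ) [Fact p.Prime] : Function.Injective (ep p) := by
  have hp0 : 0 < p := (Fact.out : p.Prime).pos
  have hζ : IsPrimitiveRoot (Complex.exp (2 * Real.pi * Complex.I / p)) p :=
    Complex.isPrimitiveRoot_exp p hp0.ne'
  intro i j hij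
  rw [ep_eq_pow, ep_eq_pow] at hij
  have := hζ.pow_inj (ZMod.val_lt i) (ZMod.val_lt j) hij
  exact ZMod.val_injective p this

lemma ep_mul_eq (p : ℕ) [Fact p.Prime] (t j : ZMod p) :
    ep p (t * j) = (Complex.exp (2 * Real.pi * Complex.I / p) ^ t.val) ^ j.val := by
  have hp0 : 0 < p := (Fact.out : p.Prime).pos
  have hζ : IsPrimitiveRoot (Complex.exp (2 * Real.pi * Complex.I / p)) p :=
    Complex.isPrimitiveRoot_exp p hp0.ne'
  rw [ep_eq_pow, ← pow_mul, ZMod.val_mul, ← pow_eq_pow_mod _ hζ.pow_eq_one]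

lemma ep_ne_zero (p : ℕ) (j : ZMod p) : ep p j ≠ 0 := Complex.exp_ne_zero _

lemma sqrtPStar_sq (p : ℕ) [Fact p.Prime] (hp : p ≠ 2) :
    (sqrtPStar p) ^ 2 = ((quadraticChar (ZMod p) (-1) : ℤ) : ℂ) * p := by
  have hp0 : 0 < p := (Fact.out : p.Prime).pos
  have hodd : p % 2 = 1 := Nat.odd_iff.mp ((Fact.out : p.Prime).odd_of_ne_two hp)
  have hchar : ringChar (ZMod p) ≠ 2 := by
    rw [ZMod.ringChar_zmod_n]; exact hp
  have hsq : ((Real.sqrt p : ℝ) : ℂ) ^ 2 = (p : ℂ) := by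
    rw [← Complex.ofReal_pow, Real.sq_sqrt (by positivity)]
    norm_num
  rw [quadraticChar_neg_one hchar, ZMod.card, ZMod.χ₄_nat_eq_if_mod_four,
    if_neg (by omega : ¬ p % 2 = 0)]
  by_cases h1 : p % 4 = 1
  · simp [sqrtPStar, h1, hsq]
  · simp only [sqrtPStar, if_neg h1, mul_pow, hsq, Complex.I_sq]
    push_cast
    ring

lemma sqrtPStar_ne_zero (p : ℕ) [Fact p.Prime] : sqrtPStar p ≠ 0 := by
  have hp0 : 0 < p := (Fact.out : p.Prime).pos
  have : Real.sqrt p ≠ 0 := by positivity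
  unfold sqrtPStar
  split <;> simp [this, Complex.I_ne_zero, Complex.ofReal_eq_zero]

lemma arith_choice (p h0 : ℕ) (hp2 : 2 ≤ p - 1) (hh : 0 < h0) (heven : Even h0)
    (hcop : Nat.gcd (h0 - 1) (p - 1) = 1) :
    ∃ m k, 0 < m ∧ m * (h0 - 1) = (p - 1) * k + 1 ∧ 0 < m * h0 ∧ Even (m * h0) ∧
      Nat.gcd (m * h0 - 1) (p - 1) = 1 := by
  haveI : NeZero (p - 1) := ⟨by omega⟩
  set m := (((h0 - 1 : ℕ) : ZMod (p - 1))⁻¹).val with hm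
  have h1 : ((h0 - 1 : ℕ) : ZMod (p - 1)) * ((h0 - 1 : ℕ) : ZMod (p - 1))⁻¹ = 1 :=
    ZMod.coe_mul_inv_eq_one _ hcop
  have h2 : (((h0 - 1) * m : ℕ) : ZMod (p - 1)) = ((1 : ℕ) : ZMod (p - 1)) := by
    push_cast
    rw [hm, ZMod.natCast_val, ZMod.cast_id]
    simpa using h1
  have h3 : ((h0 - 1) * m) % (p - 1) = 1 := by
    have := (ZMod.natCast_eq_natCast_iff _ _ _).mp h2
    unfold Nat.ModEq at this
    rwa [Nat.one_mod_eq_one.mpr (by omega)] at this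
  have hm0 : 0 < m := by
    rcases Nat.eq_zero_or_pos m with h | h
    · rw [h, Nat.mul_zero, Nat.zero_mod] at h3; omega
    · exact h
  set k := ((h0 - 1) * m) / (p - 1) with hk
  have hdm := Nat.div_add_mod ((h0 - 1) * m) (p - 1)
  rw [h3, ← hk] at hdm
  have hkey : m * (h0 - 1) = (p - 1) * k + 1 := by rw [mul_comm]; omega
  refine ⟨m, k, hm0, hkey, Nat.mul_pos hm0 hh, heven.mul_left m, ?_⟩
  obtain ⟨h0', rfl⟩ : ∃ h0', h0 = h0' + 1 := ⟨h0 - 1, by omega⟩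
  simp only [Nat.add_sub_cancel] at hkey
  have hl1 : m * (h0' + 1) - 1 = m + (p - 1) * k := by
    have : m * (h0' + 1) = m * h0' + m := by ring
    omega
  rw [hl1]
  have c1 : Nat.Coprime ((p - 1) * k + 1) (p - 1) := by
    have := (Nat.coprime_add_mul_left_left 1 (p - 1) k).mpr (Nat.coprime_one_left _)
    simpa [add_comm] using this
  have c2 : Nat.Coprime m (p - 1) :=
    Nat.Coprime.coprime_dvd_left ⟨h0', hkey ▸ rfl⟩ (hkey ▸ c1)
  exact (Nat.coprime_add_mul_left_left m (p - 1) k).mpr c2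

lemma walsh_smul (p : ℕ) [Fact p.Prime] {F : Type*} [Field F] [Fintype F]
    [Algebra (ZMod p) F] (f : F → ZMod p) (h0 : ℕ)
    (hhom : ∀ (a : (ZMod p)ˣ) (x : F),
      f (algebraMap (ZMod p) F (a : ZMod p) * x) = (a : ZMod p) ^ h0 * f x)
    (a c : (ZMod p)ˣ) (hac : (a : ZMod p) * (c : ZMod p) = (c : ZMod p) ^ h0) (β : F) :
    walsh p f (algebraMap (ZMod p) F (a : ZMod p) * β)
      = ∑ x : F, ep p ((c : ZMod p) ^ h0 * (f x - Algebra.trace (ZMod p) F (β * x))) := by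
  have hcne : (algebraMap (ZMod p) F (c : ZMod p)) ≠ 0 := by
    simpa using (map_ne_zero (algebraMap (ZMod p) F)).mpr (Units.ne_zero c)
  set e : F ≃ F := Equiv.mulLeft₀ (algebraMap (ZMod p) F (c : ZMod p)) hcne with he
  unfold walsh
  rw [← Equiv.sum_comp e (fun x => ep p (f x -
      Algebra.trace (ZMod p) F (algebraMap (ZMod p) F (a : ZMod p) * β * x)))]
  apply Finset.sum_congr rfl
  intro y _
  have h1 : e y = algebraMap (ZMod p) F (c : ZMod p) * y := rfl
  have htr : Algebra.trace (ZMod p) F (algebraMap (ZMod p) F (a : ZMod p) * β * e y)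
      = ((a : ZMod p) * (c : ZMod p)) * Algebra.trace (ZMod p) F (β * y) := by
    rw [h1]
    have h2 : algebraMap (ZMod p) F (a : ZMod p) * β *
        (algebraMap (ZMod p) F (c : ZMod p) * y)
        = ((a : ZMod p) * (c : ZMod p)) • (β * y) := by
      rw [Algebra.smul_def, map_mul]; ring
    rw [h2, map_smul, smul_eq_mul]
  rw [h1]
  rw [hhom c y]
  rw [← h1, htr, hac]
  congr 1
  ring

set_option maxHeartbeats 2000000 in
theorem statement_4 (p n s : ℕ) [Fact p.Prime] (hp : p ≠ 2) (hn : 0 < n) (hs : s ≤ n)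
    {F : Type*} [Field F] [Fintype F] [Algebra (ZMod p) F]
    (hq : Fintype.card F = p ^ n)
    (f g : F → ZMod p) (ε : ℂ)
    (hf : IsWRP p n s f ε g) :
    ∃ l : ℕ, 0 < l ∧ Even l ∧ Nat.gcd (l - 1) (p - 1) = 1 ∧
      ∀ (a : (ZMod p)ˣ) (β : F), walsh p f β ≠ 0 →
        g (algebraMap (ZMod p) F (a : ZMod p) * β) = (a : ZMod p) ^ l * g β := by
  obtain ⟨⟨hεpm, hplat, hgzero⟩, hunb, hf0, h0, hh0pos, hh0even, hh0cop, hhom⟩ := hf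
  have hple : 2 ≤ p := (Fact.out : p.Prime).two_le
  have hp3 : 3 ≤ p := by omega
  have hp0 : 0 < p := by omega
  haveI : NeZero p := ⟨hp0.ne'⟩
  obtain ⟨m, k, hm0, hkey, hl0, hleven, hlcop⟩ :=
    arith_choice p h0 (by omega) hh0pos hh0even hh0cop
  refine ⟨m * h0, hl0, hleven, hlcop, ?_⟩
  intro a β hWβ
  -- the unit `c` with `c^(h0-1) = a`
  set c : (ZMod p)ˣ := a ^ m with hc
  have hcard : a ^ (p - 1) = 1 := by
    rw [← ZMod.card_units p]; exact pow_card_eq_one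
  have hch : c ^ (h0 - 1) = a := by
    rw [hc, ← pow_mul, hkey, pow_add, pow_mul, hcard, one_pow, one_mul, pow_one]
  have hacu : a * c = c ^ h0 := by
    have : c ^ h0 = c ^ (h0 - 1) * c := by
      rw [← pow_succ]
      congr 1
      omega
    rw [this, hch]
  have hac : (a : ZMod p) * (c : ZMod p) = (c : ZMod p) ^ h0 := by
    have := congrArg (Units.val) hacu
    push_cast at this
    exact this
  set t : ZMod p := (c : ZMod p) ^ h0 with ht
  set tu : (ZMod p)ˣ := c ^ h0 with htu
  have htut : (tu : ZMod p) = t := by rw [htu, ht]; push_cast; ring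
  -- setup of the cyclotomic machinery
  set ζ : ℂ := Complex.exp (2 * Real.pi * Complex.I / p) with hζdef
  have hζ : IsPrimitiveRoot ζ p := Complex.isPrimitiveRoot_exp p hp0.ne'
  have hint : IsIntegral ℚ ζ := (hζ.isIntegral hp0).tower_top
  set pb := IntermediateField.adjoin.powerBasis hint with hpb
  set ζ' : ℚ⟮ζ⟯ := IntermediateField.AdjoinSimple.gen ℚ ζ with hζ'
  have hgen : pb.gen = ζ' := rfl
  have hmin : minpoly ℚ pb.gen = Polynomial.cyclotomic p ℚ := by
    rw [hgen, hζ']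
    erw [IntermediateField.minpoly_gen (F := ℚ) (α := ζ)]
    rw [← Polynomial.cyclotomic_eq_minpoly_rat hζ hp0]
  set ι : ℚ⟮ζ⟯ →+* ℂ := algebraMap (↥ℚ⟮ζ⟯) ℂ with hι
  have hιζ : ι ζ' = ζ := rfl
  have hιinj : Function.Injective ι := ι.injective
  have hιalg : ∀ r : ℚ, ι (algebraMap ℚ (↥ℚ⟮ζ⟯) r) = (r : ℂ) := by
    intro r
    rw [hι, ← IsScalarTower.algebraMap_apply ℚ (↥ℚ⟮ζ⟯) ℂ]
    simp
  -- the Galois-type embedding sending ζ to ζ^t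
  have hprim : IsPrimitiveRoot (ζ ^ t.val) p :=
    hζ.pow_of_coprime _ (htut ▸ ZMod.val_coe_unit_coprime tu)
  have hroot : (Polynomial.aeval (ζ ^ t.val)) (minpoly ℚ pb.gen) = 0 := by
    rw [hmin, Polynomial.aeval_def, Polynomial.eval₂_eq_eval_map, Polynomial.map_cyclotomic]
    exact hprim.isRoot_cyclotomic hp0
  set τ : ℚ⟮ζ⟯ →ₐ[ℚ] ℂ := pb.lift (ζ ^ t.val) hroot with hτ
  have hτζ : τ ζ' = ζ ^ t.val := by
    rw [hτ, ← hgen]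
    exact pb.lift_gen _ hroot
  have hτalg : ∀ r : ℚ, τ (algebraMap ℚ (↥ℚ⟮ζ⟯) r) = (r : ℂ) := by
    intro r
    rw [AlgHom.commutes]
    simp
  -- the element S of ℚ(ζ) mapping to the Walsh transform
  set S : ↥ℚ⟮ζ⟯ := ∑ x : F, ζ' ^ (f x - Algebra.trace (ZMod p) F (β * x)).val with hS
  have hιS : ι S = walsh p f β := by
    rw [hS, map_sum, walsh]
    exact Finset.sum_congr rfl fun x _ => by rw [map_pow, hιζ, ← ep_eq_pow]
  have hτS : τ S = walsh p f (algebraMap (ZMod p) F (a : ZMod p) * β) := by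
    rw [hS, map_sum, walsh_smul p f h0 hhom a c hac β]
    refine Finset.sum_congr rfl fun x _ => ?_
    rw [map_pow, hτζ, ← ep_mul_eq, ht]
  -- the Gauss sum
  have hchar : ringChar (ZMod p) ≠ 2 := by rw [ZMod.ringChar_zmod_n]; exact hp
  set χℤ := quadraticChar (ZMod p) with hχℤ
  set χ : MulChar (ZMod p) ℂ := χℤ.ringHomComp (Int.castRingHom ℂ) with hχ
  set ψ : AddChar (ZMod p) ℂ := AddChar.zmodChar p hζ.pow_eq_one with hψ
  set G : ℂ := gaussSum χ ψ with hG
  have hχ1 : χ ≠ 1 :=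
    (MulChar.ringHomComp_ne_one_iff Int.cast_injective).mpr (quadraticChar_ne_one hchar)
  have hχ2 : χ.IsQuadratic := (quadraticChar_isQuadratic (ZMod p)).comp _
  have hψprim : ψ.IsPrimitive := AddChar.zmodChar_primitive_of_primitive_root p hζ
  have hG2 : G ^ 2 = ((χℤ (-1) : ℤ) : ℂ) * p := by
    rw [hG, gaussSum_sq hχ1 hχ2 hψprim, ZMod.card]
    congr 1
  have hsqG : (sqrtPStar p) ^ 2 = G ^ 2 := by rw [hG2, sqrtPStar_sq p hp]
  have hGne : G ≠ 0 := by
    intro h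
    apply sqrtPStar_ne_zero p
    have : (sqrtPStar p) ^ 2 = 0 := by rw [hsqG, h]; ring
    exact pow_eq_zero_iff (by norm_num) |>.mp this
  -- the sign r with sqrtPStar = r * G
  obtain ⟨r, hrpm, hrG⟩ : ∃ r : ℚ, ((r : ℂ) = 1 ∨ (r : ℂ) = -1) ∧
      sqrtPStar p = (r : ℂ) * G := by
    set d : ℂ := sqrtPStar p / G with hd
    have hd2 : d ^ 2 = 1 := by
      rw [hd, div_pow, hsqG, div_self (pow_ne_zero 2 hGne)]
    have : (d - 1) * (d + 1) = 0 := by linear_combination hd2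
    rcases mul_eq_zero.mp this with h | h
    · refine ⟨1, Or.inl (by norm_num), ?_⟩
      have hd1 : d = 1 := by linear_combination h
      have h2 := (div_eq_iff hGne).mp hd1
      push_cast
      linear_combination h2
    · refine ⟨-1, Or.inr (by norm_num), ?_⟩
      have hd1 : d = -1 := by linear_combination h
      have h2 := (div_eq_iff hGne).mp hd1
      push_cast
      linear_combination h2
  -- the element G' of ℚ(ζ) mapping to G under both ι and τ
  set G' : ↥ℚ⟮ζ⟯ := ∑ x : ZMod p, (algebraMap ℚ (↥ℚ⟮ζ⟯) ((χℤ x : ℤ) : ℚ)) * ζ' ^ x.val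
    with hG'
  have hιG' : ι G' = G := by
    rw [hG', map_sum, hG, gaussSum]
    refine Finset.sum_congr rfl fun x _ => ?_
    rw [map_mul, map_pow, hιζ, hιalg, hχ, hψ, MulChar.ringHomComp_apply,
      AddChar.zmodChar_apply]
    simp only [Int.coe_castRingHom]
    push_cast
    ring
  have hχt : χℤ t = 1 := by
    have hc0 : (c : ZMod p) ≠ 0 := Units.ne_zero c
    obtain ⟨j, hj⟩ := hh0even
    have h2j : h0 = 2 * j := by omega
    rw [ht, map_pow, h2j, pow_mul, quadraticChar_sq_one hc0, one_pow]
  have hτG' : τ G' = G := by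
    have h1 : τ G' = gaussSum χ (AddChar.mulShift ψ (tu : ZMod p)) := by
      rw [hG', map_sum, gaussSum]
      refine Finset.sum_congr rfl fun x _ => ?_
      rw [map_mul, map_pow, hτζ, hτalg, AddChar.mulShift_apply, hψ, AddChar.zmodChar_apply,
        htut]
      have h4 : (ζ ^ t.val) ^ x.val = ep p (t * x) := (ep_mul_eq p t x).symm
      rw [h4, ep_eq_pow, hχ, MulChar.ringHomComp_apply, hζdef]
      simp only [Int.coe_castRingHom]
      push_cast
      ring
    have h2 : χ (tu : ZMod p) * gaussSum χ (AddChar.mulShift ψ (tu : ZMod p)) = gaussSum χ ψ :=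
      gaussSum_mulShift χ ψ tu
    have h3 : χ (tu : ZMod p) = 1 := by
      rw [hχ, MulChar.ringHomComp_apply, htut, hχt]
      norm_num
    rw [h3, one_mul] at h2
    rw [h1, h2, hG]
  -- choice of rε
  obtain ⟨rε, hrε⟩ : ∃ rε : ℚ, (rε : ℂ) = ε := by
    rcases hεpm with h | h
    · exact ⟨1, by rw [h]; norm_num⟩
    · exact ⟨-1, by rw [h]; norm_num⟩
  -- the key identity in ℚ(ζ)
  have E1 : walsh p f β = ε * sqrtPStar p ^ (n + s) * ep p (g β) := hplat β hWβ
  have hSkey : S = (algebraMap ℚ (↥ℚ⟮ζ⟯) rε) * (algebraMap ℚ (↥ℚ⟮ζ⟯) r) ^ (n + s)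
      * G' ^ (n + s) * ζ' ^ (g β).val := by
    apply hιinj
    rw [hιS, E1, map_mul, map_mul, map_mul, map_pow, map_pow, map_pow, hιG', hιζ, hιalg, hιalg,
      hrε, hrG, ep_eq_pow]
    ring
  -- apply τ
  have E2 : walsh p f (algebraMap (ZMod p) F (a : ZMod p) * β)
      = ε * sqrtPStar p ^ (n + s) * ep p (t * g β) := by
    rw [← hτS, hSkey, map_mul, map_mul, map_mul, map_pow, map_pow, map_pow, hτG', hτζ,
      hτalg, hτalg, hrε, hrG, ← ep_mul_eq]
    ring
  have hne2 : ε * sqrtPStar p ^ (n + s) ≠ 0 := by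
    apply mul_ne_zero
    · rcases hεpm with h | h <;> rw [h] <;> norm_num
    · exact pow_ne_zero _ (sqrtPStar_ne_zero p)
  have hWaβ : walsh p f (algebraMap (ZMod p) F (a : ZMod p) * β) ≠ 0 := by
    rw [E2]
    exact mul_ne_zero hne2 (ep_ne_zero p _)
  have E3 : walsh p f (algebraMap (ZMod p) F (a : ZMod p) * β)
      = ε * sqrtPStar p ^ (n + s) * ep p (g (algebraMap (ZMod p) F (a : ZMod p) * β)) :=
    hplat _ hWaβ
  have E4 : ep p (g (algebraMap (ZMod p) F (a : ZMod p) * β)) = ep p (t * g β) :=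
    mul_left_cancel₀ hne2 (E3.symm.trans E2)
  have E5 : g (algebraMap (ZMod p) F (a : ZMod p) * β) = t * g β := ep_injective p E4
  rw [E5, ht, hc]
  push_cast
  rw [← pow_mul]
end
end
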